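/- For every integer N ≥ 1 and every real q with 0 < q < 1: ∑_{n=1}^{N−1} q(1−q)^{n−1} · R(n, q/2) + (1−q)^{N−1} · R(N, q/2) ≤ 6/q². -/

import Mathlib

/-- `R n p = (1/(2p²))·((1−p)^{−(n−1)} − (1−p))`, the exact expected run time of the
(1+1) EA with uniform bit flip probability `p` on the `n`-bit LeadingOnes function
(Böttcher–Doerr–Neumann, Sudholt, Ladret). -/
noncomputable def runtimeLO (n : ℕ) (p : ℝ) : ℝ :=
  (1 / (2 * p ^ 2)) * ((1 - p) ^ (-((n : ℤ) - 1)) - (1 - p))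

/-!
Since `1 - q ≤ (1 - q/2)²`, the weight `(1 - q)^(n-1)` more than cancels the growth
`(1 - q/2)^(-(n-1))` of `R(n, q/2)`: each weighted term is at most `(2/q²)(1 - q/2)^(n-1)`.
Summing the geometric series, the first `N - 1` terms (weighted by `q`) contribute at most
`q · (2/q²) · (2/q) = 4/q²`, and the last one at most `2/q²`.
-/

open Finset

theorem runtimeLO_zero (p : ℝ) : runtimeLO 0 p = 0 := by
  simp [runtimeLO]

theorem runtimeLO_succ (k : ℕ) (p : ℝ) :
    runtimeLO (k + 1) p = 1 / (2 * p ^ 2) * (((1 - p) ^ k)⁻¹ - (1 - p)) := by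
  simp [runtimeLO]

theorem sum_Icc_pow_sub_one_le {r : ℝ} (hr0 : 0 ≤ r) (hr1 : r < 1) (M : ℕ) :
    ∑ n ∈ Icc 1 M, r ^ (n - 1) ≤ (1 - r)⁻¹ := by
  rw [← Ico_add_one_right_eq_Icc, sum_Ico_eq_sum_range]
  simp only [add_tsub_cancel_left, add_tsub_cancel_right]
  simpa [← range_eq_Ico] using geom_sum_Ico_le_of_lt_one (m := 0) (n := M) hr0 hr1

theorem one_sub_pow_mul_runtimeLO_le {q : ℝ} (hq0 : 0 < q) (hq1 : q ≤ 1) (n : ℕ) :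
    (1 - q) ^ (n - 1) * runtimeLO n (q / 2) ≤ 2 / q ^ 2 * (1 - q / 2) ^ (n - 1) := by
  obtain _ | k := n
  · simp only [runtimeLO_zero, mul_zero, zero_tsub, pow_zero, mul_one]
    positivity
  have hr : 0 < (1 - q / 2) ^ k := pow_pos (by linarith) k
  have hsq : (1 - q) ^ k ≤ ((1 - q / 2) ^ k) ^ 2 := by
    rw [← pow_mul, mul_comm, pow_mul]
    exact pow_le_pow_left₀ (by linarith) (by nlinarith) k
  have hcoef : 1 / (2 * (q / 2) ^ 2) = 2 / q ^ 2 := by field_simp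
  rw [runtimeLO_succ, hcoef, add_tsub_cancel_right]
  calc (1 - q) ^ k * (2 / q ^ 2 * (((1 - q / 2) ^ k)⁻¹ - (1 - q / 2)))
      ≤ (1 - q) ^ k * (2 / q ^ 2 * ((1 - q / 2) ^ k)⁻¹) := by
        gcongr
        linarith
    _ ≤ ((1 - q / 2) ^ k) ^ 2 * (2 / q ^ 2 * ((1 - q / 2) ^ k)⁻¹) := by gcongr
    _ = 2 / q ^ 2 * (1 - q / 2) ^ k := by field_simp

theorem stmt8_general (N : ℕ) (q : ℝ) (hq0 : 0 < q) (hq1 : q < 1) :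
    (∑ n ∈ Finset.Icc 1 (N - 1), q * (1 - q) ^ (n - 1) * runtimeLO n (q / 2)) +
      (1 - q) ^ (N - 1) * runtimeLO N (q / 2) ≤ 6 / q ^ 2 := by
  have hr0 : 0 ≤ 1 - q / 2 := by linarith
  have hr1 : 1 - q / 2 < 1 := by linarith
  calc (∑ n ∈ Icc 1 (N - 1), q * (1 - q) ^ (n - 1) * runtimeLO n (q / 2)) +
        (1 - q) ^ (N - 1) * runtimeLO N (q / 2)
      ≤ (∑ n ∈ Icc 1 (N - 1), q * (2 / q ^ 2 * (1 - q / 2) ^ (n - 1))) +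
        2 / q ^ 2 * (1 - q / 2) ^ (N - 1) := by
        refine add_le_add (sum_le_sum fun n _ => ?_) (one_sub_pow_mul_runtimeLO_le hq0 hq1.le N)
        rw [mul_assoc]
        exact mul_le_mul_of_nonneg_left (one_sub_pow_mul_runtimeLO_le hq0 hq1.le n) hq0.le
    _ = q * (2 / q ^ 2) * (∑ n ∈ Icc 1 (N - 1), (1 - q / 2) ^ (n - 1)) +
        2 / q ^ 2 * (1 - q / 2) ^ (N - 1) := by
        simp only [mul_sum, mul_assoc]
    _ ≤ q * (2 / q ^ 2) * (1 - (1 - q / 2))⁻¹ + 2 / q ^ 2 * 1 := by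
        gcongr
        · exact sum_Icc_pow_sub_one_le hr0 hr1 (N - 1)
        · exact pow_le_one₀ hr0 hr1.le
    _ = 6 / q ^ 2 := by
        rw [sub_sub_cancel]
        field_simp
        norm_num

/-- Analytic core of Theorem 3.11: the `TrunkGeo(N,q)`-average of `R(n, q/2)` is at
most `6/q²`. -/
theorem stmt8 (N : ℕ) (hN : 1 ≤ N) (q : ℝ) (hq0 : 0 < q) (hq1 : q < 1) :
    (∑ n ∈ Finset.Icc 1 (N - 1), q * (1 - q) ^ (n - 1) * runtimeLO n (q / 2)) +
      (1 - q) ^ (N - 1) * runtimeLO N (q / 2) ≤ 6 / q ^ 2 :=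
  stmt8_general N q hq0 hq1
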